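/- arXiv:math/0511483 — 2 statements merged into one kernel-verified Lean document; each statement's English description precedes it below -/
import Mathlib

section
/- Let α, β ∈ ℕⁿ be nonzero multiindices and let ω > 0 satisfy 2ω < min(1/|α|, 1/|β|). There is a constant C > 0 such that for all ε₁, ε₂ ∈ (0, 1], ∫_{Δ \ Δ^{α,β}_{ε₁,ε₂}} (|ζ₁|⋯|ζₙ|)^{-1} dλ(ζ) ≤ C · |(ε₁, ε₂)|^ω, where |(ε₁, ε₂)| = (ε₁² + ε₂²)^{1/2}. -/
/-!
On `{ζ ∈ Δ : |ζ^γ|² < ε}` we have `1 ≤ ε^ω |ζ^γ|^(-2ω)`, so the integrand `∏ |ζⱼ|⁻¹` is bounded by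
`ε^ω ∏ |ζⱼ|^(-(1 + 2ωγⱼ))`. Since `2ω|γ| < 1`, every exponent `1 + 2ωγⱼ` is below `2`, so this
weight is integrable over the polydisc, one disc factor at a time. The complement of
`Δ^{α,β}_{ε₁,ε₂}` is covered by the two sublevel sets for `α` and `β`, and `ε₁, ε₂ ≤ |(ε₁, ε₂)|`.
-/

open MeasureTheory Set Metric

lemma integrableOn_ball_norm_rpow_neg {c : ℝ} (hc : c < 2) :
    IntegrableOn (fun z : ℂ => ‖z‖ ^ (-c)) (ball 0 1) := by
  refine integrableOn_ball_of_norm_le_rpow (μ := volume) (C := 1) (α := c)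
    (by simp [Complex.finrank_real_complex]) (by simpa [Complex.finrank_real_complex]) ?_
    (continuous_norm.measurable.pow_const _).aestronglyMeasurable
  refine ae_of_all _ fun z => ?_
  rw [one_mul, Real.norm_of_nonneg (Real.rpow_nonneg (norm_nonneg z) _)]

lemma integrableOn_pi_ball_prod_norm_rpow_neg {ι : Type*} [Fintype ι] {c : ι → ℝ}
    (hc : ∀ i, c i < 2) :
    IntegrableOn (fun ζ : ι → ℂ => ∏ i, ‖ζ i‖ ^ (-c i)) (univ.pi fun _ => ball 0 1) := by
  rw [IntegrableOn, volume_pi, Measure.restrict_pi_pi]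
  exact Integrable.fintype_prod fun i => integrableOn_ball_norm_rpow_neg (hc i)

lemma prod_norm_inv_le_of_norm_prod_pow_sq_lt {ι : Type*} [Fintype ι] {γ : ι → ℕ} {ω ε : ℝ}
    (hω : 0 ≤ ω) {ζ : ι → ℂ} (hζ : ‖∏ i, ζ i ^ γ i‖ ^ 2 < ε) :
    ∏ i, ‖ζ i‖⁻¹ ≤ ε ^ ω * ∏ i, ‖ζ i‖ ^ (-(1 + 2 * ω * γ i)) := by
  have hε : 0 < ε := (sq_nonneg _).trans_lt hζ
  by_cases h0 : ∃ i, ζ i = 0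
  · obtain ⟨i, hi⟩ := h0
    rw [Finset.prod_eq_zero (Finset.mem_univ i) (by simp [hi])]
    positivity
  simp only [not_exists] at h0
  have hpos : ∀ i, 0 < ‖ζ i‖ := fun i => norm_pos_iff.2 (h0 i)
  set m := ‖∏ i, ζ i ^ γ i‖ with hm_def
  have hm : 0 < m := norm_pos_iff.2 (Finset.prod_ne_zero_iff.2 fun i _ => pow_ne_zero _ (h0 i))
  have hsplit : ∏ i, ‖ζ i‖ ^ (-(1 + 2 * ω * γ i)) = (m ^ 2) ^ (-ω) * ∏ i, ‖ζ i‖⁻¹ := by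
    have hfactor : ∀ i, ‖ζ i‖ ^ (-(1 + 2 * ω * γ i)) = ((‖ζ i‖ ^ γ i) ^ 2) ^ (-ω) * ‖ζ i‖⁻¹ := by
      intro i
      rw [← pow_mul, ← Real.rpow_natCast, ← Real.rpow_mul (hpos i).le, ← Real.rpow_neg_one,
        ← Real.rpow_add (hpos i)]
      push_cast
      ring_nf
    simp_rw [hfactor, Finset.prod_mul_distrib, hm_def, norm_prod, norm_pow, ← Finset.prod_pow]
    rw [Real.finsetProd_rpow _ _ fun i _ => by positivity]
  have hweight : 1 ≤ ε ^ ω * (m ^ 2) ^ (-ω) := by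
    calc (1 : ℝ) = ε ^ ω * ε ^ (-ω) := by rw [← Real.rpow_add hε, add_neg_cancel, Real.rpow_zero]
      _ ≤ ε ^ ω * (m ^ 2) ^ (-ω) := by
        gcongr ε ^ ω * ?_
        exact Real.rpow_le_rpow_of_nonpos (by positivity) hζ.le (neg_nonpos.2 hω)
  calc ∏ i, ‖ζ i‖⁻¹ = 1 * ∏ i, ‖ζ i‖⁻¹ := (one_mul _).symm
    _ ≤ ε ^ ω * (m ^ 2) ^ (-ω) * ∏ i, ‖ζ i‖⁻¹ := by gcongr
    _ = ε ^ ω * ∏ i, ‖ζ i‖ ^ (-(1 + 2 * ω * γ i)) := by rw [hsplit, mul_assoc]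

lemma two_mul_mul_lt_one_of_lt_inv_sqrt {ι : Type*} [Fintype ι] {γ : ι → ℕ} {ω : ℝ}
    (hω : 0 < ω) (h : 2 * ω < 1 / √(∑ i, (γ i : ℝ) ^ 2)) (i : ι) : 2 * ω * γ i < 1 := by
  set s := √(∑ i, (γ i : ℝ) ^ 2)
  have hs : 0 < s := by
    by_contra! hs
    rw [le_antisymm hs (Real.sqrt_nonneg _), div_zero] at h
    linarith
  have hγs : (γ i : ℝ) ≤ s :=
    Real.le_sqrt_of_sq_le (Finset.single_le_sum (fun j _ => sq_nonneg (γ j : ℝ)) (Finset.mem_univ i))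
  calc 2 * ω * γ i ≤ 2 * ω * s := by gcongr
    _ < 1 := (lt_div_iff₀ hs).1 h

def monomialSublevel {ι : Type*} [Fintype ι] (γ : ι → ℕ) (ε : ℝ) : Set (ι → ℂ) :=
  {ζ | (∀ i, ‖ζ i‖ < 1) ∧ ‖∏ i, ζ i ^ γ i‖ ^ 2 < ε}

lemma exists_lintegral_monomialSublevel_le {ι : Type*} [Fintype ι] (γ : ι → ℕ) {ω : ℝ}
    (hω : 0 ≤ ω) (hγ : ∀ i, 2 * ω * γ i < 1) :
    ∃ C ≥ (0 : ℝ), ∀ ε > 0, ∫⁻ ζ in monomialSublevel γ ε,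
      ENNReal.ofReal (∏ i, ‖ζ i‖⁻¹) ≤ ENNReal.ofReal (C * ε ^ ω) := by
  set Δ : Set (ι → ℂ) := univ.pi fun _ => ball 0 1
  set w : (ι → ℂ) → ℝ := fun ζ => ∏ i, ‖ζ i‖ ^ (-(1 + 2 * ω * γ i))
  have hw : IntegrableOn w Δ :=
    integrableOn_pi_ball_prod_norm_rpow_neg fun i => by linarith [hγ i]
  have hw_nonneg : ∀ ζ, 0 ≤ w ζ := fun ζ => by positivity
  refine ⟨∫ ζ in Δ, w ζ, integral_nonneg hw_nonneg, fun ε hε => ?_⟩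
  calc ∫⁻ ζ in monomialSublevel γ ε, ENNReal.ofReal (∏ i, ‖ζ i‖⁻¹)
      ≤ ∫⁻ ζ in monomialSublevel γ ε, ENNReal.ofReal (ε ^ ω) * ENNReal.ofReal (w ζ) := by
        refine setLIntegral_mono (by fun_prop) fun ζ hζ => ?_
        rw [← ENNReal.ofReal_mul (by positivity)]
        exact ENNReal.ofReal_le_ofReal (prod_norm_inv_le_of_norm_prod_pow_sq_lt hω hζ.2)
    _ ≤ ∫⁻ ζ in Δ, ENNReal.ofReal (ε ^ ω) * ENNReal.ofReal (w ζ) :=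
        lintegral_mono_set fun ζ hζ => by simpa [Δ] using hζ.1
    _ = ENNReal.ofReal ((∫ ζ in Δ, w ζ) * ε ^ ω) := by
        rw [lintegral_const_mul' _ _ ENNReal.ofReal_ne_top,
          ← ofReal_integral_eq_lintegral_ofReal hw (ae_of_all _ hw_nonneg),
          ← ENNReal.ofReal_mul (by positivity), mul_comm]

theorem stmt_5_general {n : ℕ} (α β : Fin n → ℕ) (ω : ℝ) (hω : 0 < ω)
    (hω2 : 2 * ω < min (1 / Real.sqrt (∑ j, (α j : ℝ) ^ 2))
      (1 / Real.sqrt (∑ j, (β j : ℝ) ^ 2))) :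
    ∃ C > (0:ℝ), ∀ ε₁ ∈ Ioc (0:ℝ) 1, ∀ ε₂ ∈ Ioc (0:ℝ) 1,
      (∫⁻ ζ in {ζ : Fin n → ℂ | (∀ j, ‖ζ j‖ < 1) ∧
          ¬(ε₁ ≤ ‖∏ j, ζ j ^ α j‖ ^ 2 ∧
            ε₂ ≤ ‖∏ j, ζ j ^ β j‖ ^ 2)},
        ENNReal.ofReal (∏ j, (‖ζ j‖)⁻¹)) ≤
      ENNReal.ofReal (C * Real.sqrt (ε₁ ^ 2 + ε₂ ^ 2) ^ ω) := by
  obtain ⟨C₁, hC₁, H₁⟩ := exists_lintegral_monomialSublevel_le α hω.le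
    (two_mul_mul_lt_one_of_lt_inv_sqrt hω (hω2.trans_le (min_le_left _ _)))
  obtain ⟨C₂, hC₂, H₂⟩ := exists_lintegral_monomialSublevel_le β hω.le
    (two_mul_mul_lt_one_of_lt_inv_sqrt hω (hω2.trans_le (min_le_right _ _)))
  refine ⟨C₁ + C₂ + 1, by positivity, fun ε₁ ⟨hε₁, _⟩ ε₂ ⟨hε₂, _⟩ => ?_⟩
  have hcover : {ζ : Fin n → ℂ | (∀ j, ‖ζ j‖ < 1) ∧
      ¬(ε₁ ≤ ‖∏ j, ζ j ^ α j‖ ^ 2 ∧ ε₂ ≤ ‖∏ j, ζ j ^ β j‖ ^ 2)} ⊆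
      monomialSublevel α ε₁ ∪ monomialSublevel β ε₂ := by
    rintro ζ ⟨hΔ, hζ⟩
    rcases not_and_or.1 hζ with h | h
    exacts [Or.inl ⟨hΔ, not_le.1 h⟩, Or.inr ⟨hΔ, not_le.1 h⟩]
  set r := √(ε₁ ^ 2 + ε₂ ^ 2)
  have hr₁ : ε₁ ^ ω ≤ r ^ ω :=
    Real.rpow_le_rpow hε₁.le (Real.le_sqrt_of_sq_le (by nlinarith)) hω.le
  have hr₂ : ε₂ ^ ω ≤ r ^ ω :=
    Real.rpow_le_rpow hε₂.le (Real.le_sqrt_of_sq_le (by nlinarith)) hω.le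
  refine (lintegral_mono_set hcover).trans <| (lintegral_union_le _ _ _).trans <|
    (add_le_add (H₁ ε₁ hε₁) (H₂ ε₂ hε₂)).trans ?_
  rw [← ENNReal.ofReal_add (by positivity) (by positivity)]
  refine ENNReal.ofReal_le_ofReal ?_
  nlinarith [mul_le_mul_of_nonneg_left hr₁ hC₁, mul_le_mul_of_nonneg_left hr₂ hC₂,
    Real.rpow_nonneg (Real.sqrt_nonneg (ε₁ ^ 2 + ε₂ ^ 2)) ω]

/-- For nonzero multiindices α, β and 0 < ω with
2ω < min(1/|α|, 1/|β|), there is C > 0 such that for all ε₁, ε₂ ∈ (0,1], the integral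
of (|ζ₁|⋯|ζₙ|)⁻¹ over Δ \ Δ^{α,β}_{ε₁,ε₂} is at most C·|(ε₁,ε₂)|^ω. -/
theorem stmt_5 {n : ℕ} (α β : Fin n → ℕ) (hα : α ≠ 0) (hβ : β ≠ 0) (ω : ℝ) (hω : 0 < ω)
    (hω2 : 2 * ω < min (1 / Real.sqrt (∑ j, (α j : ℝ) ^ 2))
      (1 / Real.sqrt (∑ j, (β j : ℝ) ^ 2))) :
    ∃ C > (0:ℝ), ∀ ε₁ ∈ Ioc (0:ℝ) 1, ∀ ε₂ ∈ Ioc (0:ℝ) 1,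
      (∫⁻ ζ in {ζ : Fin n → ℂ | (∀ j, ‖ζ j‖ < 1) ∧
          ¬(ε₁ ≤ ‖∏ j, ζ j ^ α j‖ ^ 2 ∧
            ε₂ ≤ ‖∏ j, ζ j ^ β j‖ ^ 2)},
        ENNReal.ofReal (∏ j, (‖ζ j‖)⁻¹)) ≤
      ENNReal.ofReal (C * Real.sqrt (ε₁ ^ 2 + ε₂ ^ 2) ^ ω) :=
  stmt_5_general α β ω hω hω2
end

section
/- Let α, β ∈ ℕⁿ be nonzero multiindices and let ω > 0 satisfy 2ω < min(1/|α|, 1/|β|). There is a constant C > 0 such that for all ε₁, ε₂ ∈ (0, 1], ∫_{Δ^{α,β}_{ε₁,ε₂}} (ε₁·ε₂/(|ζ^α|²·|ζ^β|²)) · (|ζ₁|⋯|ζₙ|)^{-1} dλ(ζ) ≤ C · |(ε₁, ε₂)|^ω, where |(ε₁, ε₂)| = (ε₁² + ε₂²)^{1/2}. -/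
/-!
On the domain both `ε₁ / |ζ^α|²` and `ε₂ / |ζ^β|²` lie in `(0, 1]`, and `ω ≤ 1`, so the integrand
is at most `(ε₁ / |ζ^α|²)^ω ∏ |ζⱼ|⁻¹ = ε₁^ω ∏ |ζⱼ|^(-(2ωαⱼ + 1))`. As `2ωαⱼ ≤ 2ω|α| < 1`, every
exponent exceeds `-2`, so by Fubini this majorant has finite integral over the polydisc, and
`ε₁ ≤ |(ε₁, ε₂)|` finishes the proof.
-/

open MeasureTheory Set Metric
open scoped ENNReal

theorem lintegral_fin_nat_prod_eq_prod {n : ℕ} {E : Fin n → Type*}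
    {mE : ∀ i, MeasurableSpace (E i)} {μ : (i : Fin n) → Measure (E i)} [∀ i, SigmaFinite (μ i)]
    {f : (i : Fin n) → E i → ℝ≥0∞} (hf : ∀ i, Measurable (f i)) :
    ∫⁻ x, ∏ i, f i (x i) ∂(Measure.pi μ) = ∏ i, ∫⁻ x, f i x ∂(μ i) := by
  induction n with
  | zero => simp
  | succ n ih =>
    rw [← ((measurePreserving_piFinSuccAbove μ 0).symm).lintegral_comp_emb
      (MeasurableEquiv.measurableEmbedding _)]
    simp_rw [MeasurableEquiv.piFinSuccAbove_symm_apply, Fin.insertNthEquiv,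
      Fin.prod_univ_succ, Fin.insertNth_zero]
    have h := lintegral_prod_mul (μ := μ 0) (ν := Measure.pi fun j : Fin n ↦ μ j.succ)
      (g := fun y ↦ ∏ j : Fin n, f j.succ (y j)) (hf 0).aemeasurable
      (Finset.measurable_prod _ fun j _ ↦ (hf j.succ).comp (measurable_pi_apply j)).aemeasurable
    rwa [ih fun i ↦ hf i.succ] at h

theorem lintegral_ball_norm_rpow_neg_lt_top {E : Type*} [NormedAddCommGroup E] [NormedSpace ℝ E]
    [FiniteDimensional ℝ E] [MeasurableSpace E] [BorelSpace E] {μ : Measure E}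
    [μ.IsAddHaarMeasure] (hE : 1 ≤ Module.finrank ℝ E) {c : ℝ} (hc : c < Module.finrank ℝ E)
    (r : ℝ) :
    ∫⁻ x in ball 0 r, ENNReal.ofReal (‖x‖ ^ (-c)) ∂μ < ∞ :=
  Integrable.lintegral_lt_top <| integrableOn_ball_of_norm_le_rpow (C := 1) hE hc
    (ae_of_all _ fun x ↦ by simp [abs_of_nonneg (Real.rpow_nonneg (norm_nonneg x) _)])
    (measurable_norm.pow_const _).aestronglyMeasurable

theorem lintegral_polydisc_prod_norm_rpow_neg_lt_top {n : ℕ} {c : Fin n → ℝ}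
    (hc : ∀ j, c j < 2) :
    ∫⁻ ζ in univ.pi fun _ ↦ ball (0 : ℂ) 1, ∏ j, ENNReal.ofReal (‖ζ j‖ ^ (-c j)) < ∞ := by
  rw [volume_pi, Measure.restrict_pi_pi,
    lintegral_fin_nat_prod_eq_prod (f := fun j z ↦ ENNReal.ofReal (‖z‖ ^ (-c j)))
      fun j ↦ (measurable_norm.pow_const _).ennreal_ofReal]
  exact ENNReal.prod_lt_top fun j _ ↦ lintegral_ball_norm_rpow_neg_lt_top
    (by simp) (by simpa using hc j) 1

theorem mul_div_mul_le_rpow_mul_rpow_neg {ε₁ ε₂ A B ω : ℝ} (hε₁ : 0 ≤ ε₁) (hε₂ : 0 ≤ ε₂)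
    (hA : ε₁ ≤ A) (hB : ε₂ ≤ B) (hω : ω ≤ 1) :
    ε₁ * ε₂ / (A * B) ≤ ε₁ ^ ω * A ^ (-ω) := by
  have hA0 : 0 ≤ A := hε₁.trans hA
  calc ε₁ * ε₂ / (A * B) = ε₁ / A * (ε₂ / B) := mul_div_mul_comm _ _ _ _
    _ ≤ ε₁ / A * 1 := by gcongr; exact div_le_one_of_le₀ hB (hε₂.trans hB)
    _ ≤ (ε₁ / A) ^ ω := by
      rw [mul_one]
      exact Real.self_le_rpow_of_le_one (by positivity) (div_le_one_of_le₀ hA hA0) hω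
    _ = ε₁ ^ ω * A ^ (-ω) := by
      rw [Real.div_rpow hε₁ hA0, Real.rpow_neg hA0, div_eq_mul_inv]

theorem rpow_neg_norm_prod_pow_sq {ι 𝕜 : Type*} [Fintype ι] [NormedField 𝕜] (ζ : ι → 𝕜)
    (α : ι → ℕ) (ω : ℝ) :
    (‖∏ j, ζ j ^ α j‖ ^ 2) ^ (-ω) = ∏ j, ‖ζ j‖ ^ (-(2 * ω * α j)) := by
  rw [norm_prod, ← Finset.prod_pow,
    ← Real.finsetProd_rpow _ _ fun j _ ↦ by positivity]
  refine Finset.prod_congr rfl fun j _ ↦ ?_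
  rw [norm_pow, ← pow_mul, ← Real.rpow_natCast, ← Real.rpow_mul (norm_nonneg _)]
  push_cast
  ring_nf

theorem mul_div_mul_mul_prod_inv_le {ι 𝕜 : Type*} [Fintype ι] [NormedField 𝕜] {ζ : ι → 𝕜}
    {α β : ι → ℕ} {ε₁ ε₂ ω : ℝ} (hε₁ : 0 ≤ ε₁) (hε₂ : 0 ≤ ε₂) (hω0 : 0 ≤ ω) (hω1 : ω ≤ 1)
    (hα : ε₁ ≤ ‖∏ j, ζ j ^ α j‖ ^ 2) (hβ : ε₂ ≤ ‖∏ j, ζ j ^ β j‖ ^ 2) :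
    ε₁ * ε₂ / (‖∏ j, ζ j ^ α j‖ ^ 2 * ‖∏ j, ζ j ^ β j‖ ^ 2) * ∏ j, ‖ζ j‖⁻¹ ≤
      ε₁ ^ ω * ∏ j, ‖ζ j‖ ^ (-(2 * ω * α j + 1)) := by
  have hsplit : ∀ j, ‖ζ j‖ ^ (-(2 * ω * α j + 1)) = ‖ζ j‖ ^ (-(2 * ω * α j)) * ‖ζ j‖⁻¹ := by
    intro j
    have hexp : -(2 * ω * α j) + -1 ≠ 0 := by
      have : 0 ≤ 2 * ω * α j := by positivity
      linarith
    rw [← Real.rpow_neg_one, ← Real.rpow_add' (norm_nonneg _) hexp, neg_add]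
  calc _ ≤ ε₁ ^ ω * (‖∏ j, ζ j ^ α j‖ ^ 2) ^ (-ω) * ∏ j, ‖ζ j‖⁻¹ := by
        gcongr
        exact mul_div_mul_le_rpow_mul_rpow_neg hε₁ hε₂ hα hβ hω1
    _ = ε₁ ^ ω * ∏ j, ‖ζ j‖ ^ (-(2 * ω * α j + 1)) := by
        rw [mul_assoc, rpow_neg_norm_prod_pow_sq, ← Finset.prod_mul_distrib]
        simp only [hsplit]

theorem setLIntegral_le_rpow_mul_lintegral_polydisc {n : ℕ} (α β : Fin n → ℕ) {ε₁ ε₂ ω : ℝ}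
    (hε₁ : 0 ≤ ε₁) (hε₂ : 0 ≤ ε₂) (hω0 : 0 ≤ ω) (hω1 : ω ≤ 1) :
    ∫⁻ ζ in {ζ : Fin n → ℂ | (∀ j, ‖ζ j‖ < 1) ∧ ε₁ ≤ ‖∏ j, ζ j ^ α j‖ ^ 2 ∧
        ε₂ ≤ ‖∏ j, ζ j ^ β j‖ ^ 2},
      ENNReal.ofReal (ε₁ * ε₂ / (‖∏ j, ζ j ^ α j‖ ^ 2 * ‖∏ j, ζ j ^ β j‖ ^ 2) *
        ∏ j, ‖ζ j‖⁻¹) ≤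
    ENNReal.ofReal (ε₁ ^ ω) * ∫⁻ ζ in univ.pi fun _ ↦ ball (0 : ℂ) 1,
      ∏ j, ENNReal.ofReal (‖ζ j‖ ^ (-(2 * ω * α j + 1))) := by
  have hmeas : Measurable fun ζ : Fin n → ℂ ↦
      ∏ j, ENNReal.ofReal (‖ζ j‖ ^ (-(2 * ω * α j + 1))) := by fun_prop
  calc _ ≤ ∫⁻ ζ in {ζ : Fin n → ℂ | (∀ j, ‖ζ j‖ < 1) ∧ ε₁ ≤ ‖∏ j, ζ j ^ α j‖ ^ 2 ∧
          ε₂ ≤ ‖∏ j, ζ j ^ β j‖ ^ 2},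
        ENNReal.ofReal (ε₁ ^ ω) * ∏ j, ENNReal.ofReal (‖ζ j‖ ^ (-(2 * ω * α j + 1))) := by
        refine setLIntegral_mono (hmeas.const_mul _) fun ζ ⟨_, hα, hβ⟩ ↦ ?_
        rw [← ENNReal.ofReal_prod_of_nonneg fun j _ ↦ by positivity,
          ← ENNReal.ofReal_mul (by positivity)]
        exact ENNReal.ofReal_le_ofReal (mul_div_mul_mul_prod_inv_le hε₁ hε₂ hω0 hω1 hα hβ)
    _ ≤ ∫⁻ ζ in univ.pi fun _ ↦ ball (0 : ℂ) 1,
        ENNReal.ofReal (ε₁ ^ ω) * ∏ j, ENNReal.ofReal (‖ζ j‖ ^ (-(2 * ω * α j + 1))) :=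
        lintegral_mono_set fun ζ hζ j _ ↦ mem_ball_zero_iff.2 (hζ.1 j)
    _ = _ := lintegral_const_mul _ hmeas

theorem lt_one_and_mul_lt_one_of_lt_one_div_sqrt {ι : Type*} [Fintype ι] (γ : ι → ℕ) {t : ℝ}
    (ht : 0 < t) (h : t < 1 / √(∑ j, (γ j : ℝ) ^ 2)) : t < 1 ∧ ∀ j, t * γ j < 1 := by
  set s := √(∑ j, (γ j : ℝ) ^ 2)
  have hs : 0 < s := one_div_pos.1 (ht.trans h)
  have hts : t * s < 1 := (lt_div_iff₀ hs).1 h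
  constructor
  -- `1 / √0 = 0`, so `h` forces `γ ≠ 0` and hence `1 ≤ s`.
  · have hsum : (1 : ℝ) ≤ ∑ j, (γ j : ℝ) ^ 2 := by
      have hpos : (0 : ℝ) < ∑ j, (γ j : ℝ) ^ 2 := Real.sqrt_pos.1 hs
      exact_mod_cast (show (0 : ℝ) < ((∑ j, γ j ^ 2 : ℕ) : ℝ) by push_cast; exact hpos)
    nlinarith [Real.one_le_sqrt.2 hsum]
  · intro j
    have hγs : (γ j : ℝ) ≤ s := (Real.le_sqrt (by positivity) (by positivity)).2
      (Finset.single_le_sum (fun k _ ↦ sq_nonneg (γ k : ℝ)) (Finset.mem_univ j))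
    nlinarith

theorem stmt_8_general {n : ℕ} (α β : Fin n → ℕ) (ω : ℝ) (hω : 0 < ω)
    (hω2 : 2 * ω < min (1 / Real.sqrt (∑ j, (α j : ℝ) ^ 2))
      (1 / Real.sqrt (∑ j, (β j : ℝ) ^ 2))) :
    ∃ C > (0:ℝ), ∀ ε₁ ∈ Ioc (0:ℝ) 1, ∀ ε₂ ∈ Ioc (0:ℝ) 1,
      (∫⁻ ζ in {ζ : Fin n → ℂ | (∀ j, ‖ζ j‖ < 1) ∧
          ε₁ ≤ ‖∏ j, ζ j ^ α j‖ ^ 2 ∧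
          ε₂ ≤ ‖∏ j, ζ j ^ β j‖ ^ 2},
        ENNReal.ofReal ((ε₁ * ε₂ /
            (‖∏ j, ζ j ^ α j‖ ^ 2 * ‖∏ j, ζ j ^ β j‖ ^ 2)) *
          ∏ j, (‖ζ j‖)⁻¹)) ≤
      ENNReal.ofReal (C * Real.sqrt (ε₁ ^ 2 + ε₂ ^ 2) ^ ω) := by
  obtain ⟨h2ω, hαω⟩ := lt_one_and_mul_lt_one_of_lt_one_div_sqrt α (by positivity)
    (hω2.trans_le (min_le_left _ _))
  set I := ∫⁻ ζ in univ.pi fun _ ↦ ball (0 : ℂ) 1,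
    ∏ j, ENNReal.ofReal (‖ζ j‖ ^ (-(2 * ω * α j + 1)))
  have hI : I < ⊤ := lintegral_polydisc_prod_norm_rpow_neg_lt_top fun j ↦ by linarith [hαω j]
  refine ⟨I.toReal + 1, by positivity, fun ε₁ ⟨hε₁, _⟩ ε₂ ⟨hε₂, _⟩ ↦ ?_⟩
  have hε₁_le : ε₁ ≤ √(ε₁ ^ 2 + ε₂ ^ 2) := Real.le_sqrt_of_sq_le (by nlinarith)
  calc _ ≤ ENNReal.ofReal (ε₁ ^ ω) * I :=
        setLIntegral_le_rpow_mul_lintegral_polydisc α β hε₁.le hε₂.le hω.le (by linarith)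
    _ = ENNReal.ofReal (ε₁ ^ ω * I.toReal) := by
        rw [ENNReal.ofReal_mul (by positivity), ENNReal.ofReal_toReal hI.ne]
    _ ≤ _ := by
        rw [mul_comm]
        gcongr
        linarith

/-- For nonzero multiindices α, β and 0 < ω with 2ω < min(1/|α|, 1/|β|),
there is C > 0 such that for all ε₁, ε₂ ∈ (0,1], the integral of
(ε₁·ε₂/(|ζ^α|²·|ζ^β|²))·(|ζ₁|⋯|ζₙ|)⁻¹ over Δ^{α,β}_{ε₁,ε₂} is at most C·|(ε₁,ε₂)|^ω. -/
theorem stmt_8 {n : ℕ} (α β : Fin n → ℕ) (hα : α ≠ 0) (hβ : β ≠ 0) (ω : ℝ) (hω : 0 < ω)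
    (hω2 : 2 * ω < min (1 / Real.sqrt (∑ j, (α j : ℝ) ^ 2))
      (1 / Real.sqrt (∑ j, (β j : ℝ) ^ 2))) :
    ∃ C > (0:ℝ), ∀ ε₁ ∈ Ioc (0:ℝ) 1, ∀ ε₂ ∈ Ioc (0:ℝ) 1,
      (∫⁻ ζ in {ζ : Fin n → ℂ | (∀ j, ‖ζ j‖ < 1) ∧
          ε₁ ≤ ‖∏ j, ζ j ^ α j‖ ^ 2 ∧
          ε₂ ≤ ‖∏ j, ζ j ^ β j‖ ^ 2},
        ENNReal.ofReal ((ε₁ * ε₂ /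
            (‖∏ j, ζ j ^ α j‖ ^ 2 * ‖∏ j, ζ j ^ β j‖ ^ 2)) *
          ∏ j, (‖ζ j‖)⁻¹)) ≤
      ENNReal.ofReal (C * Real.sqrt (ε₁ ^ 2 + ε₂ ^ 2) ^ ω) :=
  stmt_8_general α β ω hω hω2
end
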